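/- arXiv:math/0006227 — 2 statements merged into one kernel-verified Lean document; each statement's English description precedes it below -/
import Mathlib

section
/- Let n ≥ 1 and let s be a nonzero complex number with s^{2m} ≠ 1 for all integers m with 1 ≤ m ≤ 2n+1. Set α = s^{2n}. Then Wenzl's quantum dimension of the single-column partition 1^{2n+1} (2n+1 parts equal to 1) equals 1: ⟨1^{2n+1}⟩_{α,s} = 1. -/
open Finset

/-- Quantum integer `[m] = (s^m - s^{-m})/(s - s⁻¹)`. -/
noncomputable def qint (s : ℂ) (m : ℤ) : ℂ := (s ^ m - s ^ (-m)) / (s - s⁻¹)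

/-- Quantum integer `[m]_α = (α s^m - α⁻¹ s^{-m})/(s - s⁻¹)`. -/
noncomputable def qintA (α s : ℂ) (m : ℤ) : ℂ := (α * s ^ m - α⁻¹ * s ^ (-m)) / (s - s⁻¹)

/-- The cells `(i,j)` (row `i`, column `j`, both 1-based) of the Young diagram of
the partition `lam`, assuming all parts of index `> N` vanish. -/
def cells (lam : ℕ → ℕ) (N : ℕ) : Finset (ℕ × ℕ) :=
  (Finset.Icc 1 N ×ˢ Finset.Icc 1 (lam 1)).filter (fun p => p.2 ≤ lam p.1)

/-- Hook length `hl(i,j) = λ_i + λ^∨_j - i - j + 1`. -/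
def hookl (lam lamV : ℕ → ℕ) (p : ℕ × ℕ) : ℤ :=
  (lam p.1 : ℤ) + (lamV p.2 : ℤ) - p.1 - p.2 + 1

/-- `d_λ(i,j)`: equals `λ_i + λ_j - i - j + 1` if `i ≤ j`, and
`-λ^∨_i - λ^∨_j + i + j - 1` if `i > j`. -/
def dcell (lam lamV : ℕ → ℕ) (p : ℕ × ℕ) : ℤ :=
  if p.1 ≤ p.2 then (lam p.1 : ℤ) + (lam p.2 : ℤ) - p.1 - p.2 + 1
  else -(lamV p.1 : ℤ) - (lamV p.2 : ℤ) + p.1 + p.2 - 1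

/-- `d'_λ(i,j)`: equals `λ_i + λ_j - i - j + 1` if `i < j`, and
`-λ^∨_i - λ^∨_j + i + j - 1` if `i ≥ j`. -/
def dcell' (lam lamV : ℕ → ℕ) (p : ℕ × ℕ) : ℤ :=
  if p.1 < p.2 then (lam p.1 : ℤ) + (lam p.2 : ℤ) - p.1 - p.2 + 1
  else -(lamV p.1 : ℤ) - (lamV p.2 : ℤ) + p.1 + p.2 - 1

/-- Wenzl's quantum dimension
`⟨λ⟩_{α,s} = ∏_{(j,j)∈λ} ([λ_j - λ^∨_j]_α + [hl(j,j)])/[hl(j,j)] ·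
∏_{(i,j)∈λ, i≠j} [d_λ(i,j)]_α/[hl(i,j)]`. -/
noncomputable def wenzl (α s : ℂ) (lam lamV : ℕ → ℕ) (N : ℕ) : ℂ :=
  (∏ p ∈ (cells lam N).filter (fun p => p.1 = p.2),
      (qintA α s ((lam p.1 : ℤ) - (lamV p.1 : ℤ)) + qint s (hookl lam lamV p)) /
        qint s (hookl lam lamV p)) *
  ∏ p ∈ (cells lam N).filter (fun p => p.1 ≠ p.2),
      qintA α s (dcell lam lamV p) / qint s (hookl lam lamV p)


/-- The single-column partition `1^j` (j parts equal to 1), as a 1-based part function. -/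
def colPart (j : ℕ) : ℕ → ℕ := fun i => if 1 ≤ i ∧ i ≤ j then 1 else 0

/-- The single-row partition `(j)`, as a 1-based part function. -/
def rowPart (j : ℕ) : ℕ → ℕ := fun i => if i = 1 then j else 0

/-!
For a single column `1^N` every cell lies in column 1: the corner `(1,1)` contributes
`([1 - N]_α + [N]) / [N]` and the cell `(i,1)`, `i ≥ 2`, contributes `[i - N]_α / [N + 1 - i]`.
Taking `α = s^(N-1)` turns `[m]_α` into `[m + N - 1]`, so the corner factor becomes
`([0] + [N]) / [N] = 1`, and the remaining product `∏ [i - 1] / [N + 1 - i]` is `1` because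
`i ↦ N + 2 - i` swaps numerators and denominators.
-/

section QuantumIntegers

variable {s : ℂ}

lemma qintA_pow (hs : s ≠ 0) (k : ℕ) (m : ℤ) : qintA (s ^ k) s m = qint s (k + m) := by
  unfold qintA qint
  rw [← zpow_natCast s k, ← zpow_add₀ hs, ← zpow_neg, ← zpow_add₀ hs, neg_add]

lemma qint_zero : qint s 0 = 0 := by simp [qint]

lemma zpow_sub_zpow_neg_eq_zero_iff (hs : s ≠ 0) (m : ℤ) :
    s ^ m - s ^ (-m) = 0 ↔ s ^ (2 * m) = 1 := by
  have h : s ^ m - s ^ (-m) = s ^ (-m) * (s ^ (2 * m) - 1) := by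
    rw [mul_sub, ← zpow_add₀ hs, mul_one]
    ring_nf
  rw [h, mul_eq_zero, sub_eq_zero, or_iff_right (zpow_ne_zero _ hs)]

lemma qint_natCast_ne_zero (hs : s ≠ 0) {m : ℕ} (hm : s ^ (2 * m) ≠ 1) : qint s m ≠ 0 := by
  have hsq : s ^ 2 ≠ 1 := fun h => hm (by rw [pow_mul, h, one_pow])
  refine div_ne_zero ?_ ?_
  · rw [Ne, zpow_sub_zpow_neg_eq_zero_iff hs]
    exact_mod_cast hm
  · intro h
    exact hsq (by simpa using (zpow_sub_zpow_neg_eq_zero_iff hs 1).mp (by simpa using h))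

end QuantumIntegers

lemma prod_Icc_two_reflect {M : Type*} [CommMonoid M] (f : ℤ → M) (N : ℕ) :
    ∏ i ∈ Icc 2 N, f ((i : ℤ) - 1) = ∏ i ∈ Icc 2 N, f (N + 1 - i) := by
  refine prod_nbij' (fun i => N + 2 - i) (fun i => N + 2 - i) ?_ ?_ ?_ ?_ ?_ <;>
    intro i hi <;> simp only [mem_Icc] at hi ⊢
  · omega
  · omega
  · omega
  · omega
  · congr 1
    omega

section Column

variable {N i : ℕ}

lemma cells_colPart (N : ℕ) : cells (colPart N) N = Icc 1 N ×ˢ {1} := by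
  ext ⟨i, j⟩
  simp only [cells, colPart, mem_filter, mem_product, mem_Icc, mem_singleton, le_refl, true_and]
  split_ifs <;> omega

lemma hookl_colPart_rowPart (hi : 1 ≤ i) (hiN : i ≤ N) :
    hookl (colPart N) (rowPart N) (i, 1) = N + 1 - i := by
  rw [hookl, colPart, rowPart, if_pos ⟨hi, hiN⟩, if_pos rfl]
  push_cast
  ring

lemma dcell_colPart_rowPart (hi : 1 < i) :
    dcell (colPart N) (rowPart N) (i, 1) = i - N := by
  rw [dcell, if_neg hi.not_ge]
  simp only [rowPart, if_neg hi.ne', if_pos]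
  push_cast
  ring

lemma wenzl_colPart (α s : ℂ) (hN : 1 ≤ N) :
    wenzl α s (colPart N) (rowPart N) N =
      (qintA α s (1 - N) + qint s N) / qint s N *
        ∏ i ∈ Icc 2 N, qintA α s (i - N) / qint s (N + 1 - i) := by
  have hdiag : (cells (colPart N) N).filter (fun p => p.1 = p.2) = {(1, 1)} := by
    ext ⟨i, j⟩
    simp only [cells_colPart, mem_filter, mem_product, mem_Icc, mem_singleton, Prod.mk.injEq]
    omega
  have hoff : (cells (colPart N) N).filter (fun p => p.1 ≠ p.2) = Icc 2 N ×ˢ {1} := by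
    ext ⟨i, j⟩
    simp only [cells_colPart, mem_filter, mem_product, mem_Icc, mem_singleton, ne_eq]
    omega
  rw [wenzl, hdiag, hoff, prod_singleton, prod_product]
  simp only [prod_singleton]
  congr 1
  · rw [hookl_colPart_rowPart le_rfl hN]
    simp [colPart, rowPart, hN]
  · refine prod_congr rfl fun i hi => ?_
    rw [mem_Icc] at hi
    rw [dcell_colPart_rowPart (by omega), hookl_colPart_rowPart (by omega) hi.2]

theorem wenzl_colPart_pow_pred {s : ℂ} (hs : s ≠ 0) (hN : 1 ≤ N)
    (hroot : ∀ m : ℕ, 1 ≤ m → m ≤ N → s ^ (2 * m) ≠ 1) :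
    wenzl (s ^ (N - 1)) s (colPart N) (rowPart N) N = 1 := by
  have hq : ∀ m : ℕ, 1 ≤ m → m ≤ N → qint s m ≠ 0 := fun m h1 h2 =>
    qint_natCast_ne_zero hs (hroot m h1 h2)
  have hshift : ∀ m : ℤ, qintA (s ^ (N - 1)) s m = qint s (m + N - 1) := fun m => by
    rw [qintA_pow hs]
    congr 1
    push_cast [hN]
    ring
  rw [wenzl_colPart _ _ hN, hshift, sub_add_cancel, sub_self, qint_zero, zero_add,
    div_self (hq N hN le_rfl), one_mul]
  simp only [hshift, sub_add_cancel]
  rw [prod_div_distrib, prod_Icc_two_reflect (qint s)]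
  refine div_self (prod_ne_zero_iff.mpr fun i hi => ?_)
  rw [mem_Icc] at hi
  have := hq (N + 1 - i) (by omega) (by omega)
  rwa [Nat.cast_sub (by omega), Nat.cast_add_one] at this

end Column

theorem wenzl_column_odd_orthogonal_general (n : ℕ) (s : ℂ) (hs : s ≠ 0)
    (hroot : ∀ m : ℕ, 1 ≤ m → m ≤ 2 * n + 1 → s ^ (2 * m) ≠ 1) :
    wenzl (s ^ (2 * n)) s (colPart (2 * n + 1)) (rowPart (2 * n + 1)) (2 * n + 1) = 1 :=
  wenzl_colPart_pow_pred hs (Nat.le_add_left 1 _) hroot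

/-- For `α = s^{2n}`, the quantum dimension of the single column
`1^{2n+1}` equals `1`. -/
theorem wenzl_column_odd_orthogonal (n : ℕ) (hn : 1 ≤ n) (s : ℂ) (hs : s ≠ 0)
    (hroot : ∀ m : ℕ, 1 ≤ m → m ≤ 2 * n + 1 → s ^ (2 * m) ≠ 1) :
    wenzl (s ^ (2 * n)) s (colPart (2 * n + 1)) (rowPart (2 * n + 1)) (2 * n + 1) = 1 :=
  wenzl_column_odd_orthogonal_general n s hs hroot
end

section
/- Let n, k ≥ 1, set l = 2n+2k+2, let s ∈ ℂ be a primitive 2l-th root of unity, and let g ≥ 1 be an integer. For a partition λ = (λ_1,…,λ_n) with at most n parts define Q(λ) = (−1)^{|λ|} ∏_{j=1}^{n} [2n+2+2λ_j−2j]_s/[2n+2−2j]_s · ∏_{1≤i<j≤n} [2n+2+λ_i−i+λ_j−j]_s·[λ_i−i−λ_j+j]_s / ([2n+2−i−j]_s·[j−i]_s), where [m]_s = s^m − s^{−m}. Let Γ = {partitions λ with λ_1 ≤ k and at most n parts}. Then (∑_{λ∈Γ} Q(λ)²)^{g−1} · ∑_{λ∈Γ} Q(λ)^{2(1−g)} =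 (−(2n+2k+2))^{n(g−1)} · ∑_{n+k ≥ l_1 > l_2 > … > l_n > 0} ( ∏_{j=1}^{n} [2l_j]_s · ∏_{1≤i<j≤n} [l_i+l_j]_s·[l_i−l_j]_s )^{2(1−g)}, where the sum on the right runs over all strictly decreasing n-tuples of integers (l_1,…,l_n) with n+k ≥ l_1 and l_n > 0, and negative integer powers denote inverses in ℂ (all quantities raised to negative powers are nonzero). -/
open Finset

/-- `[m]_s = s^m - s^{-m}`. -/
noncomputable def br (s : ℂ) (m : ℤ) : ℂ := s ^ m - s ^ (-m)

/-- The quantum dimension `Q(λ)` of the simple object of `C^{n,k}` labelled by the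
partition `λ = (λ_1,…,λ_n)` (here `f : Fin n → ℕ` with `f j = λ_{j+1}`):
`Q(λ) = (-1)^{|λ|} ∏_{j=1}^n [2n+2+2λ_j-2j]/[2n+2-2j] ·
∏_{1≤i<j≤n} [2n+2+λ_i-i+λ_j-j]·[λ_i-i-λ_j+j] / ([2n+2-i-j]·[j-i])`. -/
noncomputable def Qdim (s : ℂ) (n : ℕ) (f : Fin n → ℕ) : ℂ :=
  (-1 : ℂ) ^ (∑ j, f j) *
  (∏ j : Fin n,
    br s (2 * n + 2 + 2 * (f j : ℤ) - 2 * ((j : ℕ) + 1)) /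
      br s (2 * n + 2 - 2 * (((j : ℕ) : ℤ) + 1))) *
  ∏ p ∈ (Finset.univ ×ˢ Finset.univ : Finset (Fin n × Fin n)).filter (fun p => p.1 < p.2),
    br s (2 * n + 2 + (f p.1 : ℤ) - ((p.1 : ℕ) + 1) + (f p.2 : ℤ) - ((p.2 : ℕ) + 1)) *
      br s ((f p.1 : ℤ) - ((p.1 : ℕ) + 1) - (f p.2 : ℤ) + ((p.2 : ℕ) + 1)) /
    (br s (2 * n + 2 - (((p.1 : ℕ) : ℤ) + 1) - (((p.2 : ℕ) : ℤ) + 1)) *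
      br s ((((p.2 : ℕ) : ℤ) + 1) - (((p.1 : ℕ) : ℤ) + 1)))

/-- The labelling set `Γ = Γ(C^{n,k})`: partitions with at most `n` parts, each `≤ k`. -/
noncomputable def GammaC (n k : ℕ) : Finset (Fin n → ℕ) :=
  (Finset.Icc 0 (fun _ => k)).filter (fun f => ∀ i j : Fin n, i ≤ j → f j ≤ f i)

/-- The index set of strictly decreasing tuples `n+k ≥ l_1 > l_2 > … > l_n > 0`
(with `t j = l_{j+1}`). -/
noncomputable def Tuples (n k : ℕ) : Finset (Fin n → ℕ) :=
  (Finset.Icc 0 (fun _ => n + k)).filter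
    (fun t => (∀ i j : Fin n, i < j → t j < t i) ∧ ∀ i, 0 < t i)

/-- `∏_{j=1}^n [2l_j]_s · ∏_{1≤i<j≤n} [l_i+l_j]_s [l_i-l_j]_s`. -/
noncomputable def Pprod (s : ℂ) (n : ℕ) (t : Fin n → ℕ) : ℂ :=
  (∏ j : Fin n, br s (2 * (t j : ℤ))) *
  ∏ p ∈ (Finset.univ ×ˢ Finset.univ : Finset (Fin n × Fin n)).filter (fun p => p.1 < p.2),
    br s ((t p.1 : ℤ) + (t p.2 : ℤ)) * br s ((t p.1 : ℤ) - (t p.2 : ℤ))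

/-!
Up to sign, `Q(λ) = P(λ + ρ) / P(ρ)`, where `P = Pprod` is the Weyl denominator of type `C` and
`ρ = (n, n - 1, …, 1)`, and `λ ↦ λ + ρ` maps `Γ` onto the strictly decreasing tuples `t` summed
over on the right. The Weyl denominator formula gives `P(t) = ± det ([2 t_i j]_s)`, and the rows
`([2 a x]_s)_{1 ≤ x ≤ n + k}`, `1 ≤ a ≤ n + k`, are orthogonal of square norm `-l` (a discrete sine
transform), so Cauchy–Binet yields `∑_t P(t)² = (-l)^n`. Hence `∑_Γ Q² = (-l)^n / P(ρ)²`, and the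
formula follows by pulling `P(ρ)²` out of every term.
-/

namespace Polynomial.Chebyshev

theorem monic_S_and_natDegree_S (R : Type*) [CommRing R] [Nontrivial R] (n : ℕ) :
    (S R n).Monic ∧ (S R n).natDegree = n := by
  induction n using Nat.twoStepInduction with
  | zero => simp
  | one => simp
  | more n _ ih =>
    push_cast at ih ⊢
    have hX : (X * S R (n + 1)).natDegree = n + 2 := by
      rw [natDegree_X_mul ih.1.ne_zero, ih.2]
    rw [S_add_two]
    constructor
    · exact (monic_X.mul ih.1).sub_of_left (degree_lt_degree (by omega))
    · rw [natDegree_sub_eq_left_of_natDegree_lt (by omega), hX]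

theorem sub_inv_mul_S_eval_add_inv {K : Type*} [Field K] {x : K} (hx : x ≠ 0) (m : ℕ) :
    (x - x⁻¹) * (S K m).eval (x + x⁻¹) = x ^ (m + 1) - x⁻¹ ^ (m + 1) := by
  induction m using Nat.twoStepInduction with
  | zero => simp
  | one => simp; ring
  | more m ih₀ ih₁ =>
    push_cast at ih₁ ⊢
    rw [S_add_two, eval_sub, eval_mul, eval_X]
    linear_combination (x + x⁻¹) * ih₁ - ih₀ + (x ^ (m + 1) - x⁻¹ ^ (m + 1)) * mul_inv_cancel₀ hx

end Polynomial.Chebyshev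

open Polynomial in
/-- The Weyl denominator formula for `Sp(2n)`. -/
theorem Matrix.det_pow_sub_inv_pow {K : Type*} [Field K] {n : ℕ} (x : Fin n → K)
    (hx : ∀ i, x i ≠ 0) :
    (of fun i j : Fin n => x i ^ ((j : ℕ) + 1) - (x i)⁻¹ ^ ((j : ℕ) + 1)).det =
      (∏ i, (x i - (x i)⁻¹)) * ∏ i, ∏ j ∈ Ioi i, ((x j + (x j)⁻¹) - (x i + (x i)⁻¹)) := by
  have hS := Chebyshev.monic_S_and_natDegree_S K
  have hM : (of fun i j : Fin n => x i ^ ((j : ℕ) + 1) - (x i)⁻¹ ^ ((j : ℕ) + 1)) =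
      of fun i j : Fin n =>
        (x i - (x i)⁻¹) * of (fun i j : Fin n => (Chebyshev.S K j).eval (x i + (x i)⁻¹)) i j := by
    ext i j
    simp [Chebyshev.sub_inv_mul_S_eval_add_inv (hx i)]
  rw [hM, det_mul_column, ← det_eval_matrixOfPolynomials_eq_det_vandermonde _ _
    (fun j => (hS j).2) (fun j => (hS j).1), det_vandermonde]

theorem Finset.prod_filter_lt_eq_prod_Ioi {ι M : Type*} [Fintype ι] [LinearOrder ι]
    [LocallyFiniteOrderTop ι] [CommMonoid M] (F : ι × ι → M) :
    ∏ p ∈ (univ ×ˢ univ : Finset (ι × ι)).filter (fun p => p.1 < p.2), F p =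
      ∏ i, ∏ j ∈ Ioi i, F (i, j) := by
  rw [prod_filter, prod_product]
  refine prod_congr rfl fun i _ => ?_
  rw [← prod_filter]
  congr 1
  ext
  simp

section GeomSum

variable {K : Type*} [Field K]

theorem sub_one_mul_sum_Icc_pow_add_inv_pow {w : K} (hw : w ≠ 0) (N : ℕ) :
    (w - 1) * ∑ x ∈ Icc 1 N, (w ^ x + w⁻¹ ^ x) = w ^ (N + 1) - w⁻¹ ^ N - (w - 1) := by
  induction N with
  | zero => simp
  | succ N ih =>
    rw [sum_Icc_succ_top (by omega), mul_add, ih]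
    linear_combination w⁻¹ ^ N * mul_inv_cancel₀ hw

theorem sum_Icc_pow_add_inv_pow {w : K} (hw : w ≠ 1) {N : ℕ} (hN : (w ^ (N + 1)) ^ 2 = 1) :
    ∑ x ∈ Icc 1 N, (w ^ x + w⁻¹ ^ x) = -1 - w ^ (N + 1) := by
  have hw0 : w ≠ 0 := by rintro rfl; simp at hN
  have hinv : w⁻¹ ^ N = w * w ^ (N + 1) := by
    rw [inv_pow]
    exact inv_eq_of_mul_eq_one_right (by rw [← hN]; ring)
  apply mul_left_cancel₀ (sub_ne_zero.mpr hw)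
  rw [sub_one_mul_sum_Icc_pow_add_inv_pow hw0, hinv]
  ring

end GeomSum

open Equiv in
/-- Cauchy–Binet, summed over all row selections rather than only the increasing ones. -/
theorem Matrix.sum_piFinset_det_sq {α ι R : Type*} [DecidableEq α] [Fintype ι] [DecidableEq ι]
    [CommRing R] (S : Finset α) (B : α → ι → R) :
    ∑ f ∈ Fintype.piFinset (fun _ : ι => S), (of fun i j => B (f i) j).det ^ 2 =
      (Fintype.card ι).factorial * (of fun a b => ∑ x ∈ S, B x a * B x b).det := by
  set G := of fun a b => ∑ x ∈ S, B x a * B x b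
  have hdet : ∀ M : Matrix ι ι R, M.det = ∑ σ : Perm ι, (Perm.sign σ : R) * ∏ i, M i (σ i) :=
    fun M => by rw [← det_transpose, det_apply']; rfl
  have hrow : ∀ σ : Perm ι, ∑ τ : Perm ι, (Perm.sign τ : R) * ∏ i, G (σ i) (τ i) =
      Perm.sign σ * G.det := fun σ => by
    rw [← det_permute, hdet]
    rfl
  calc ∑ f ∈ Fintype.piFinset (fun _ : ι => S), (of fun i j => B (f i) j).det ^ 2
      = ∑ f ∈ Fintype.piFinset (fun _ : ι => S), ∑ σ : Perm ι, ∑ τ : Perm ι,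
          (Perm.sign σ : R) * (Perm.sign τ * ∏ i, (B (f i) (σ i) * B (f i) (τ i))) := by
        refine sum_congr rfl fun f _ => ?_
        rw [sq, hdet, sum_mul_sum]
        refine sum_congr rfl fun σ _ => sum_congr rfl fun τ _ => ?_
        rw [prod_mul_distrib]
        simp only [of_apply]
        ring
    _ = ∑ σ : Perm ι, (Perm.sign σ : R) * ∑ τ : Perm ι, Perm.sign τ * ∏ i, G (σ i) (τ i) := by
        rw [sum_comm]
        refine sum_congr rfl fun σ _ => ?_
        rw [sum_comm, mul_sum]
        refine sum_congr rfl fun τ _ => ?_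
        rw [← mul_sum, ← mul_sum, sum_prod_piFinset S fun i x => B x (σ i) * B x (τ i)]
        rfl
    _ = (Fintype.card ι).factorial * G.det := by
        simp only [hrow, ← mul_assoc, ← Units.val_mul, ← Int.cast_mul, Int.units_mul_self,
          Units.val_one, Int.cast_one, one_mul, sum_const, card_univ, Fintype.card_perm,
          nsmul_eq_mul]

theorem Finset.sum_piFinset_eq_factorial_smul_sum_strictAnti {α M : Type*} [LinearOrder α]
    [AddCommMonoid M] {n : ℕ} (S : Finset α) (A : Finset (Fin n → α))
    (hA : ∀ t, t ∈ A ↔ (∀ i, t i ∈ S) ∧ StrictAnti t) (φ : (Fin n → α) → M)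
    (hperm : ∀ f (σ : Equiv.Perm (Fin n)), φ (f ∘ σ) = φ f)
    (hinj : ∀ f, ¬ Function.Injective f → φ f = 0) :
    ∑ f ∈ Fintype.piFinset (fun _ => S), φ f = n.factorial • ∑ t ∈ A, φ t := by
  classical
  let sorting (f : Fin n → α) : Equiv.Perm (Fin n) := Tuple.sort (OrderDual.toDual ∘ f)
  have hanti : ∀ f, Antitone (f ∘ sorting f) :=
    fun f => monotone_toDual_comp_iff.mp (Tuple.monotone_sort _)
  calc ∑ f ∈ Fintype.piFinset (fun _ => S), φ f
      = ∑ f ∈ (Fintype.piFinset fun _ => S).filter Function.Injective, φ f :=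
        (sum_filter_of_ne fun f _ hf => not_imp_comm.mp (hinj f) hf).symm
    _ = ∑ p ∈ (univ ×ˢ A : Finset (Equiv.Perm (Fin n) × (Fin n → α))), φ p.2 := by
        refine sum_nbij' (fun f => ((sorting f)⁻¹, f ∘ sorting f)) (fun p => p.2 ∘ p.1)
          ?_ ?_ ?_ ?_ fun f _ => (hperm f _).symm
        · intro f hf
          simp only [mem_filter, Fintype.mem_piFinset] at hf
          simp only [mem_product, mem_univ, true_and, hA]
          exact ⟨fun i => hf.1 _, (hanti f).strictAnti_of_injective (hf.2.comp (Equiv.injective _))⟩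
        · rintro ⟨σ, t⟩ hp
          simp only [mem_product, mem_univ, true_and, hA] at hp
          simp only [mem_filter, Fintype.mem_piFinset]
          exact ⟨fun i => hp.1 _, hp.2.injective.comp (Equiv.injective _)⟩
        · intro f _
          ext i
          simp
        · rintro ⟨σ, t⟩ hp
          simp only [mem_product, mem_univ, true_and, hA] at hp
          have ht : (t ∘ σ) ∘ sorting (t ∘ σ) = (t ∘ σ) ∘ ⇑σ⁻¹ :=
            Tuple.unique_antitone (hanti _) (by simpa [Function.comp_assoc] using hp.2.antitone)
          have hσ : sorting (t ∘ σ) = σ⁻¹ :=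
            Equiv.ext fun i => (hp.2.injective.comp σ.injective) (congrFun ht i)
          simp only [hσ, inv_inv, Prod.mk.injEq, true_and]
          ext i
          simp
    _ = n.factorial • ∑ t ∈ A, φ t := by
        simp only [sum_product, sum_const, card_univ, Fintype.card_perm, Fintype.card_fin]

theorem StrictAnti.antitone_add_val {n : ℕ} {t : Fin n → ℕ} (ht : StrictAnti t) :
    Antitone fun j => t j + j := by
  cases n with
  | zero => exact fun i => i.elim0
  | succ n =>
    refine Fin.antitone_iff_succ_le.mpr fun i => ?_
    have := ht (Fin.castSucc_lt_succ : i.castSucc < i.succ)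
    simp only [Fin.val_succ, Fin.val_castSucc]
    omega

section Bracket

variable {s : ℂ} {L : ℕ}

theorem br_mul_natCast (m : ℤ) (k : ℕ) : br s (m * k) = (s ^ m) ^ k - (s ^ m)⁻¹ ^ k := by
  rw [br, ← zpow_natCast, ← zpow_mul, ← zpow_natCast, inv_zpow', ← zpow_mul, mul_neg]

theorem br_add_mul_br_sub (hs : s ≠ 0) (a b : ℤ) :
    br s (a + b) * br s (a - b) =
      (s ^ (2 * a) + (s ^ (2 * a))⁻¹) - (s ^ (2 * b) + (s ^ (2 * b))⁻¹) := by
  simp only [br, zpow_neg, zpow_add₀ hs, zpow_sub₀ hs, two_mul]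
  field_simp
  ring

theorem zpow_two_mul_ne_one (hs : IsPrimitiveRoot s (2 * L)) {m : ℤ} (hm : ¬ (L : ℤ) ∣ m) :
    s ^ (2 * m) ≠ 1 := by
  rw [Ne, hs.zpow_eq_one_iff_dvd, Nat.cast_mul, Nat.cast_two, mul_dvd_mul_iff_left two_ne_zero]
  exact hm

theorem zpow_two_mul_pow_eq_one (hs : IsPrimitiveRoot s (2 * L)) (m : ℤ) :
    (s ^ (2 * m)) ^ L = 1 := by
  rw [← zpow_natCast, ← zpow_mul, mul_comm, ← mul_assoc, zpow_mul]
  norm_cast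
  rw [mul_comm, hs.pow_eq_one, one_zpow]

theorem br_ne_zero (hs : IsPrimitiveRoot s (2 * L)) {m : ℤ} (h0 : 0 < m) (hL : m < L) :
    br s m ≠ 0 := by
  have hs0 : s ≠ 0 := hs.ne_zero (by omega)
  have hm : ¬ (L : ℤ) ∣ m := fun h => by have := Int.le_of_dvd h0 h; omega
  intro h
  apply zpow_two_mul_ne_one hs hm
  rw [br, sub_eq_zero] at h
  rw [two_mul, zpow_add₀ hs0]
  nth_rewrite 1 [h]
  rw [← zpow_add₀ hs0, neg_add_cancel, zpow_zero]

theorem sum_br_mul_br {N : ℕ} (hs : IsPrimitiveRoot s (2 * (2 * N + 2))) {a b : ℕ}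
    (ha : a ∈ Icc 1 N) (hb : b ∈ Icc 1 N) :
    ∑ x ∈ Icc 1 N, br s (2 * x * a) * br s (2 * x * b) =
      if a = b then -(2 * N + 2 : ℂ) else 0 := by
  rw [mem_Icc] at ha hb
  have hs0 : s ≠ 0 := hs.ne_zero (by omega)
  set c : ℤ → ℂ := fun m => ∑ x ∈ Icc 1 N, ((s ^ (2 * m)) ^ x + (s ^ (2 * m))⁻¹ ^ x)
  have hpow : ∀ (m : ℤ) (x : ℕ), s ^ (2 * (x * m)) = (s ^ (2 * m)) ^ x := fun m x => by
    rw [← zpow_natCast, ← zpow_mul]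
    ring_nf
  have hsum : ∑ x ∈ Icc 1 N, br s (2 * x * a) * br s (2 * x * b) = c (a + b) - c (a - b) := by
    rw [← sum_sub_distrib]
    refine sum_congr rfl fun x _ => ?_
    rw [inv_pow, inv_pow, ← hpow, ← hpow, ← br_add_mul_br_sub hs0]
    congr 2 <;> ring
  have hc : ∀ m : ℤ, ¬ ((2 * N + 2 : ℕ) : ℤ) ∣ m → c m = -1 - (s ^ (2 * m)) ^ (N + 1) :=
    fun m hm => sum_Icc_pow_add_inv_pow (zpow_two_mul_ne_one hs hm)
      (by rw [← pow_mul, mul_comm, ← zpow_two_mul_pow_eq_one hs m]; ring_nf)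
  have hshift : ∀ m b : ℤ, (s ^ (2 * (m + 2 * b))) ^ (N + 1) = (s ^ (2 * m)) ^ (N + 1) := by
    intro m b
    simp only [← zpow_natCast, ← zpow_mul]
    rw [show 2 * (m + 2 * b) * ((N + 1 : ℕ) : ℤ) =
        2 * m * (N + 1 : ℕ) + ((2 * (2 * N + 2) : ℕ) : ℤ) * b by push_cast; ring,
      zpow_add₀ hs0, zpow_mul s ((2 * (2 * N + 2) : ℕ) : ℤ) b, zpow_natCast s, hs.pow_eq_one,
      one_zpow, mul_one]
  have hab : ¬ ((2 * N + 2 : ℕ) : ℤ) ∣ (a + b : ℤ) := fun h => by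
    have := Int.le_of_dvd (by omega) h
    omega
  rw [hsum, hc _ hab]
  split_ifs with h
  · subst h
    rw [show (a + a : ℤ) = 0 + 2 * a by ring, hshift]
    simp only [c, sub_self, mul_zero, zpow_zero, one_pow, inv_one, sum_const, Nat.card_Icc,
      add_tsub_cancel_right, nsmul_eq_mul]
    ring
  · have hab' : ¬ ((2 * N + 2 : ℕ) : ℤ) ∣ (a - b : ℤ) := fun h' => by
      have := Int.eq_zero_of_abs_lt_dvd h' (abs_lt.2 ⟨by omega, by omega⟩)
      omega
    rw [hc _ hab', show (a + b : ℤ) = (a - b) + 2 * b by ring, hshift]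
    ring

end Bracket

noncomputable def alternant (s : ℂ) {n : ℕ} (t : Fin n → ℕ) : Matrix (Fin n) (Fin n) ℂ :=
  Matrix.of fun i j => br s (2 * t i * ((j : ℕ) + 1))

section Alternant

variable {s : ℂ} {n k : ℕ}

theorem Pprod_sq_eq_det_alternant_sq (hs : s ≠ 0) (t : Fin n → ℕ) :
    Pprod s n t ^ 2 = (alternant s t).det ^ 2 := by
  set x : Fin n → ℂ := fun i => s ^ (2 * (t i : ℤ))
  have hA : alternant s t =
      Matrix.of fun i j : Fin n => x i ^ ((j : ℕ) + 1) - (x i)⁻¹ ^ ((j : ℕ) + 1) := by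
    ext i j
    simp only [alternant, Matrix.of_apply, x]
    exact_mod_cast br_mul_natCast (2 * t i) ((j : ℕ) + 1)
  have hP : Pprod s n t = (∏ i, (x i - (x i)⁻¹)) *
      ∏ i, ∏ j ∈ Ioi i, -((x j + (x j)⁻¹) - (x i + (x i)⁻¹)) := by
    rw [Pprod, prod_filter_lt_eq_prod_Ioi]
    congr 1
    · simp [br, x]
    · refine prod_congr rfl fun i _ => prod_congr rfl fun j _ => ?_
      rw [br_add_mul_br_sub hs]
      ring
  rw [hA, Matrix.det_pow_sub_inv_pow x fun i => zpow_ne_zero _ hs, hP, mul_pow, mul_pow]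
  simp only [← prod_pow, neg_sq]

theorem det_alternant_comp_perm (t : Fin n → ℕ) (σ : Equiv.Perm (Fin n)) :
    (alternant s (t ∘ σ)).det = Equiv.Perm.sign σ * (alternant s t).det :=
  Matrix.det_permute σ (alternant s t)

theorem det_alternant_eq_zero {t : Fin n → ℕ} (ht : ¬ Function.Injective t) :
    (alternant s t).det = 0 := by
  obtain ⟨i, j, hij, hne⟩ := Function.not_injective_iff.mp ht
  exact Matrix.det_zero_of_row_eq hne (funext fun c => by simp [alternant, hij])

theorem mem_Tuples_iff {t : Fin n → ℕ} :
    t ∈ Tuples n k ↔ (∀ i, t i ∈ Icc 1 (n + k)) ∧ StrictAnti t := by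
  simp only [Tuples, mem_filter, mem_Icc, Pi.le_def, zero_le, true_and, forall_and,
    Nat.one_le_iff_ne_zero, Nat.pos_iff_ne_zero, StrictAnti]
  tauto

theorem sum_Tuples_det_alternant_sq (hs : IsPrimitiveRoot s (2 * (2 * (n + k) + 2))) :
    ∑ t ∈ Tuples n k, (alternant s t).det ^ 2 = (-(2 * (n + k) + 2 : ℂ)) ^ n := by
  have hG : (Matrix.of fun a b : Fin n => ∑ x ∈ Icc 1 (n + k),
      br s (2 * x * ((a : ℕ) + 1)) * br s (2 * x * ((b : ℕ) + 1))) =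
      Matrix.diagonal fun _ => -(2 * (n + k : ℕ) + 2 : ℂ) := by
    ext a b
    have h := sum_br_mul_br hs (a := (a : ℕ) + 1) (b := (b : ℕ) + 1)
      (mem_Icc.mpr ⟨by omega, by omega⟩) (mem_Icc.mpr ⟨by omega, by omega⟩)
    push_cast at h
    simp [h, Matrix.diagonal_apply, Fin.val_inj]
  have hsum := (sum_piFinset_eq_factorial_smul_sum_strictAnti (Icc 1 (n + k)) (Tuples n k)
    (fun _ => mem_Tuples_iff) (fun t => (alternant s t).det ^ 2)
    (fun t σ => by
      rw [det_alternant_comp_perm, mul_pow, ← Int.cast_pow, ← Units.val_pow_eq_pow_val,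
        Int.units_sq, Units.val_one, Int.cast_one, one_mul])
    (fun _ ht => by rw [det_alternant_eq_zero ht, zero_pow two_ne_zero])).symm.trans
    (Matrix.sum_piFinset_det_sq (Icc 1 (n + k)) fun x (j : Fin n) => br s (2 * x * ((j : ℕ) + 1)))
  rw [hG, Matrix.det_diagonal, prod_const, card_univ, Fintype.card_fin, nsmul_eq_mul] at hsum
  push_cast at hsum
  exact mul_left_cancel₀ (Nat.cast_ne_zero.mpr n.factorial_ne_zero) hsum

theorem sum_Tuples_Pprod_sq (hs : IsPrimitiveRoot s (2 * (2 * n + 2 * k + 2))) :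
    ∑ t ∈ Tuples n k, Pprod s n t ^ 2 = (-((2 * n + 2 * k + 2 : ℕ) : ℂ)) ^ n := by
  have hs' : IsPrimitiveRoot s (2 * (2 * (n + k) + 2)) := by convert hs using 2; ring
  rw [sum_congr rfl fun t _ => Pprod_sq_eq_det_alternant_sq (hs.ne_zero (by omega)) t,
    sum_Tuples_det_alternant_sq hs']
  push_cast
  ring

theorem Pprod_ne_zero (hs : IsPrimitiveRoot s (2 * (2 * n + 2 * k + 2)))
    {t : Fin n → ℕ} (ht : t ∈ Tuples n k) : Pprod s n t ≠ 0 := by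
  rw [mem_Tuples_iff] at ht
  have hb := fun i => mem_Icc.mp (ht.1 i)
  refine mul_ne_zero (prod_ne_zero_iff.mpr fun j _ => ?_) (prod_ne_zero_iff.mpr fun p hp => ?_)
  · have := hb j
    exact br_ne_zero hs (by omega) (by omega)
  · have hlt := ht.2 (mem_filter.mp hp).2
    have := hb p.1
    have := hb p.2
    exact mul_ne_zero (br_ne_zero hs (by omega) (by omega)) (br_ne_zero hs (by omega) (by omega))

end Alternant

def rho (n : ℕ) : Fin n → ℕ := fun j => n - j

section Relabel

variable {n k : ℕ}

theorem mem_GammaC_iff {f : Fin n → ℕ} : f ∈ GammaC n k ↔ (∀ i, f i ≤ k) ∧ Antitone f := by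
  simp only [GammaC, mem_filter, mem_Icc, Pi.le_def, zero_le, true_and, Antitone]

theorem rho_le_and_add_le_of_mem_Tuples {t : Fin n → ℕ} (ht : t ∈ Tuples n k) (j : Fin n) :
    n - j ≤ t j ∧ t j + j ≤ n + k := by
  rw [mem_Tuples_iff] at ht
  have hj := j.isLt
  have hmono := ht.2.antitone_add_val
  have hlast := hmono (show j ≤ ⟨n - 1, by omega⟩ from Fin.mk_le_mk.mpr (by omega))
  have hfirst := hmono (show (⟨0, by omega⟩ : Fin n) ≤ j from Fin.mk_le_mk.mpr (by omega))
  have h1 := mem_Icc.mp (ht.1 ⟨n - 1, by omega⟩)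
  have h2 := mem_Icc.mp (ht.1 ⟨0, by omega⟩)
  simp only at hlast hfirst
  omega

theorem rho_mem_Tuples : rho n ∈ Tuples n k := by
  refine mem_Tuples_iff.mpr ⟨fun i => mem_Icc.mpr ⟨?_, ?_⟩, fun i j hij => ?_⟩ <;>
    simp only [rho] <;> omega

theorem add_rho_mem_Tuples {f : Fin n → ℕ} (hf : f ∈ GammaC n k) : f + rho n ∈ Tuples n k := by
  rw [mem_GammaC_iff] at hf
  refine mem_Tuples_iff.mpr ⟨fun i => mem_Icc.mpr ⟨?_, ?_⟩, fun i j hij => ?_⟩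
  · simp only [Pi.add_apply, rho]
    omega
  · have := hf.1 i
    simp only [Pi.add_apply, rho]
    omega
  · have := hf.2 hij.le
    simp only [Pi.add_apply, rho]
    omega

theorem sub_rho_mem_GammaC {t : Fin n → ℕ} (ht : t ∈ Tuples n k) : t - rho n ∈ GammaC n k := by
  refine mem_GammaC_iff.mpr ⟨fun i => ?_, fun i j hij => ?_⟩
  · have := rho_le_and_add_le_of_mem_Tuples ht i
    simp only [Pi.sub_apply, rho]
    omega
  · have := (mem_Tuples_iff.mp ht).2.antitone_add_val hij
    have := rho_le_and_add_le_of_mem_Tuples ht j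
    simp only [Pi.sub_apply, rho] at *
    omega

theorem sum_GammaC_eq_sum_Tuples {M : Type*} [AddCommMonoid M] (φ : (Fin n → ℕ) → M) :
    ∑ f ∈ GammaC n k, φ (f + rho n) = ∑ t ∈ Tuples n k, φ t :=
  sum_nbij' (· + rho n) (· - rho n) (fun _ => add_rho_mem_Tuples)
    (fun _ => sub_rho_mem_GammaC) (fun f _ => by ext; simp)
    (fun t ht => by
      ext j
      have := rho_le_and_add_le_of_mem_Tuples ht j
      simp only [Pi.add_apply, Pi.sub_apply, rho]
      omega)
    (fun _ _ => rfl)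

end Relabel

theorem Qdim_eq_Pprod_div (s : ℂ) {n : ℕ} (f : Fin n → ℕ) :
    Qdim s n f = (-1) ^ (∑ j, f j) * (Pprod s n (f + rho n) / Pprod s n (rho n)) := by
  rw [Qdim, Pprod, Pprod, mul_div_mul_comm, ← prod_div_distrib, ← prod_div_distrib, mul_assoc]
  congr 2 <;> refine prod_congr rfl fun p _ => ?_
  · simp only [Pi.add_apply, rho]
    congr 2 <;> omega
  · simp only [Pi.add_apply, rho]
    congr 3 <;> omega

theorem Qdim_sq (s : ℂ) {n : ℕ} (f : Fin n → ℕ) :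
    Qdim s n f ^ 2 = Pprod s n (f + rho n) ^ 2 / Pprod s n (rho n) ^ 2 := by
  rw [Qdim_eq_Pprod_div, mul_pow, div_pow, ← pow_mul, pow_mul', neg_one_sq, one_pow, one_mul]

theorem verlinde_C_general (n k : ℕ)
    (s : ℂ) (hs : IsPrimitiveRoot s (2 * (2 * n + 2 * k + 2)))
    (g : ℕ) :
    (∑ f ∈ GammaC n k, Qdim s n f ^ 2) ^ ((g : ℤ) - 1) *
      ∑ f ∈ GammaC n k, Qdim s n f ^ (2 * (1 - (g : ℤ))) =
    (-((2 * n + 2 * k + 2 : ℕ) : ℂ)) ^ ((n : ℤ) * ((g : ℤ) - 1)) *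
      ∑ t ∈ Tuples n k, Pprod s n t ^ (2 * (1 - (g : ℤ))) := by
  set D := Pprod s n (rho n)
  have hD : (D ^ 2) ^ ((g : ℤ) - 1) ≠ 0 :=
    zpow_ne_zero _ (pow_ne_zero 2 (Pprod_ne_zero hs rho_mem_Tuples))
  have hsq : ∑ f ∈ GammaC n k, Qdim s n f ^ 2 = (-((2 * n + 2 * k + 2 : ℕ) : ℂ)) ^ n / D ^ 2 := by
    simp only [Qdim_sq, ← sum_div]
    rw [sum_GammaC_eq_sum_Tuples (Pprod s n · ^ 2), sum_Tuples_Pprod_sq hs]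
  have hpow : ∑ f ∈ GammaC n k, Qdim s n f ^ (2 * (1 - (g : ℤ))) =
      (D ^ 2) ^ ((g : ℤ) - 1) * ∑ t ∈ Tuples n k, Pprod s n t ^ (2 * (1 - (g : ℤ))) := by
    rw [mul_sum, ← sum_GammaC_eq_sum_Tuples]
    refine sum_congr rfl fun f _ => ?_
    rw [zpow_mul, zpow_ofNat, Qdim_sq, div_zpow, zpow_mul, zpow_ofNat, div_eq_mul_inv, ← zpow_neg,
      neg_sub, mul_comm]
  rw [hsq, hpow, div_zpow, ← mul_assoc, div_mul_cancel₀ _ hD, zpow_mul, zpow_natCast]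

/-- The genus-`g` Verlinde formula for the modular category
`C^{n,k}` (`l = 2n+2k+2`, `s` a primitive `2l`-th root of unity):
`(∑_{λ∈Γ} Q(λ)²)^{g-1} ∑_{λ∈Γ} Q(λ)^{2(1-g)}
 = (-(2n+2k+2))^{n(g-1)} ∑_{n+k ≥ l_1 > … > l_n > 0}
   (∏_j [2l_j] ∏_{i<j} [l_i+l_j][l_i-l_j])^{2(1-g)}`. -/
theorem verlinde_C (n k : ℕ) (hn : 1 ≤ n) (hk : 1 ≤ k)
    (s : ℂ) (hs : IsPrimitiveRoot s (2 * (2 * n + 2 * k + 2)))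
    (g : ℕ) (hg : 1 ≤ g) :
    (∑ f ∈ GammaC n k, Qdim s n f ^ 2) ^ ((g : ℤ) - 1) *
      ∑ f ∈ GammaC n k, Qdim s n f ^ (2 * (1 - (g : ℤ))) =
    (-((2 * n + 2 * k + 2 : ℕ) : ℂ)) ^ ((n : ℤ) * ((g : ℤ) - 1)) *
      ∑ t ∈ Tuples n k, Pprod s n t ^ (2 * (1 - (g : ℤ))) :=
  verlinde_C_general n k s hs g
end
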